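/- Let a, b be real numbers, let n ≥ 5, and let B_n be the determinant of the n×n matrix whose (i,j) entry equals 1 if -1 ≤ i-j ≤ 2, equals a if (i,j) = (1,n-1) or (i,j) = (2,n), equals b if (i,j) = (1,n), and equals 0 otherwise. Then B_n = (a-1)^2 if n ≡ 0 (mod 4), B_n = a^2 + b + 1 if n ≡ 1 (mod 4), B_n = a^2 + 2a - b if n ≡ 2 (mod 4), and B_n = a^2 if n ≡ 3 (mod 4). -/

import Mathlib

open Matrix

def Mmat (a b : ℝ) (n : ℕ) : Matrix (Fin n) (Fin n) ℝ :=
  Matrix.of fun i j : Fin n =>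
    if ((i : ℕ) = 0 ∧ (j : ℕ) = n - 2) ∨ ((i : ℕ) = 1 ∧ (j : ℕ) = n - 1) then a
    else if (i : ℕ) = 0 ∧ (j : ℕ) = n - 1 then b
    else if (-1 : ℤ) ≤ ((i : ℕ) : ℤ) - ((j : ℕ) : ℤ) ∧ ((i : ℕ) : ℤ) - ((j : ℕ) : ℤ) ≤ 2 then (1 : ℝ) else 0

def Amat : Matrix (Fin 4) (Fin 4) ℝ := !![1,1,0,0;1,1,1,0;1,1,1,1;0,1,1,1]
def AmatInv : Matrix (Fin 4) (Fin 4) ℝ := !![0,0,1,-1;1,0,-1,1;-1,1,0,0;0,-1,1,0]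

lemma Amat_mul_inv : Amat * AmatInv = 1 := by
  ext i j
  fin_cases i <;> fin_cases j <;>
    simp [Amat, AmatInv, Matrix.mul_apply, Fin.sum_univ_four, Matrix.one_apply, Fin.ext_iff]

lemma Amat_det : Amat.det = 1 := by
  rw [show Amat = !![1,1,0,0;1,1,1,0;1,1,1,1;0,1,1,1] from rfl, Matrix.det_succ_row_zero]
  simp [Fin.sum_univ_succ, Matrix.det_fin_three, Matrix.submatrix_apply, Fin.succAbove]

def Bmat (a b : ℝ) (n : ℕ) : Matrix (Fin 4) (Fin n) ℝ := Matrix.of fun k j =>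
  if (k : ℕ) = 0 ∧ (j : ℕ) = n - 2 then a
  else if (k : ℕ) = 0 ∧ (j : ℕ) = n - 1 then b
  else if (k : ℕ) = 1 ∧ (j : ℕ) = n - 1 then a
  else if (k : ℕ) = 3 ∧ (j : ℕ) = 0 then 1 else 0

def Cmat (n : ℕ) : Matrix (Fin n) (Fin 4) ℝ := Matrix.of fun i k =>
  if ((i : ℕ) = 0 ∧ 2 ≤ (k : ℕ)) ∨ ((i : ℕ) = 1 ∧ (k : ℕ) = 3) then 1 else 0

def Dmat (n : ℕ) : Matrix (Fin n) (Fin n) ℝ := Matrix.of fun i j =>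
  if (-1 : ℤ) ≤ ((i : ℕ) : ℤ) - ((j : ℕ) : ℤ) ∧ ((i : ℕ) : ℤ) - ((j : ℕ) : ℤ) ≤ 2 then (1 : ℝ) else 0

lemma hblock (a b : ℝ) (n : ℕ) (hn : 4 ≤ n) :
    (Mmat a b (4 + n)).submatrix ⇑finSumFinEquiv ⇑finSumFinEquiv =
      Matrix.fromBlocks Amat (Bmat a b n) (Cmat n) (Dmat n) := by
  ext i j
  rcases i with i | i <;> rcases j with j | j <;>
    simp only [Matrix.submatrix_apply, finSumFinEquiv_apply_left, finSumFinEquiv_apply_right,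
      Matrix.fromBlocks_apply₁₁, Matrix.fromBlocks_apply₁₂, Matrix.fromBlocks_apply₂₁,
      Matrix.fromBlocks_apply₂₂, Mmat, Bmat, Cmat, Dmat, Matrix.of_apply,
      Fin.coe_castAdd, Fin.coe_natAdd]
  · -- inl inl : both < 4
    have hi := i.isLt; have hj := j.isLt
    have hi := i.isLt; have hj := j.isLt
    have hA : Amat i j = if (-1 : ℤ) ≤ ((i:ℕ):ℤ) - ((j:ℕ):ℤ) ∧ ((i:ℕ):ℤ) - ((j:ℕ):ℤ) ≤ 2 then (1:ℝ) else 0 := by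
      fin_cases i <;> fin_cases j <;> norm_num [Amat, Matrix.vecHead, Matrix.vecTail]
    rw [hA]
    split_ifs <;> first | rfl | (exfalso; omega)
  · -- inl inr
    have hi := i.isLt; have hj := j.isLt
    split_ifs <;> first | rfl | omega
  · have hi := i.isLt; have hj := j.isLt
    split_ifs <;> first | rfl | omega
  · have hi := i.isLt; have hj := j.isLt
    split_ifs <;> first | rfl | omega

def CAmat (n : ℕ) : Matrix (Fin n) (Fin 4) ℝ := Matrix.of fun i k =>
  if ((i : ℕ) = 0 ∧ (k : ℕ) = 0) ∨ ((i : ℕ) = 1 ∧ (k : ℕ) = 1) then -1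
  else if ((i : ℕ) = 0 ∨ (i : ℕ) = 1) ∧ (k : ℕ) = 2 then 1 else 0

lemma hCA (n : ℕ) : Cmat n * AmatInv = CAmat n := by
  ext i k
  fin_cases k <;>
    simp [Matrix.mul_apply, Fin.sum_univ_four, Cmat, AmatInv, CAmat,
      Matrix.vecHead, Matrix.vecTail, show ((3:Fin 4):ℕ) = 3 from rfl,
      show ((2:Fin 4):ℕ) = 2 from rfl, show ((1:Fin 4):ℕ) = 1 from rfl,
      show ((0:Fin 4):ℕ) = 0 from rfl]
  all_goals split_ifs <;> first | ring1 | (exfalso; omega)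

set_option maxHeartbeats 2000000 in
lemma schur (a b : ℝ) (n : ℕ) (hn : 4 ≤ n) :
    Dmat n - Cmat n * AmatInv * Bmat a b n = Mmat a b n := by
  rw [hCA]
  ext i j
  have hi := i.isLt; have hj := j.isLt
  simp only [Matrix.sub_apply, Matrix.mul_apply, Fin.sum_univ_four, Dmat, CAmat, Bmat,
    Mmat, Matrix.of_apply]
  norm_num
  split_ifs <;> first | ring1 | (exfalso; omega)

lemma peel (a b : ℝ) (n : ℕ) (hn : 4 ≤ n) :
    (Mmat a b (4 + n)).det = (Mmat a b n).det := by
  have : Invertible Amat := invertibleOfRightInverse _ _ Amat_mul_inv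
  rw [← Matrix.det_submatrix_equiv_self finSumFinEquiv, hblock a b n hn,
    Matrix.det_fromBlocks₁₁, Amat_det, invOf_eq_right_inv Amat_mul_inv, schur a b n hn, one_mul]

lemma base4 (a b : ℝ) : (Mmat a b 4).det = (a - 1) ^ 2 := by
  have h : Mmat a b 4 = !![1,1,a,b;1,1,1,a;1,1,1,1;0,1,1,1] := by
    ext i j
    fin_cases i <;> fin_cases j <;> norm_num [Mmat, Matrix.vecHead, Matrix.vecTail]
  rw [h, Matrix.det_succ_row_zero]
  simp [Fin.sum_univ_succ, Matrix.det_fin_three, Matrix.submatrix_apply, Fin.succAbove]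
  ring

set_option maxRecDepth 20000

lemma base5 (a b : ℝ) : (Mmat a b 5).det = a ^ 2 + b + 1 := by
  have h : Mmat a b 5 = !![1,1,0,a,b;1,1,1,0,a;1,1,1,1,0;0,1,1,1,1;0,0,1,1,1] := by
    ext i j
    fin_cases i <;> fin_cases j <;> norm_num [Mmat, Matrix.vecHead, Matrix.vecTail]
  rw [h]
  simp [Matrix.det_succ_row_zero, Fin.sum_univ_succ, Matrix.det_fin_three,
    Matrix.submatrix_apply, Fin.succAbove]
  ring

set_option maxHeartbeats 2000000 in
lemma base6 (a b : ℝ) : (Mmat a b 6).det = a ^ 2 + 2 * a - b := by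
  have h : Mmat a b 6 = !![1,1,0,0,a,b;1,1,1,0,0,a;1,1,1,1,0,0;0,1,1,1,1,0;0,0,1,1,1,1;0,0,0,1,1,1] := by
    ext i j
    fin_cases i <;> fin_cases j <;> norm_num [Mmat, Matrix.vecHead, Matrix.vecTail]
  rw [h]
  simp [Matrix.det_succ_row_zero, Fin.sum_univ_succ, Matrix.det_fin_three,
    Matrix.submatrix_apply, Fin.succAbove]
  ring

set_option maxHeartbeats 2000000 in
lemma det6_0 (a : ℝ) :
    Matrix.det !![1,1,0,0,0,a;1,1,1,0,0,0;1,1,1,1,0,0;0,1,1,1,1,0;0,0,1,1,1,1;(0:ℝ),0,0,1,1,1] = -a := by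
  simp [Matrix.det_succ_row_zero, Fin.sum_univ_succ, Matrix.det_fin_three,
    Matrix.submatrix_apply, Fin.succAbove]
  ring

set_option maxHeartbeats 2000000 in
lemma det6_1 (a b : ℝ) :
    Matrix.det !![1,0,0,0,a,b;1,1,1,0,0,0;1,1,1,1,0,0;0,1,1,1,1,0;0,0,1,1,1,1;(0:ℝ),0,0,1,1,1] = 1 + a - b := by
  simp [Matrix.det_succ_row_zero, Fin.sum_univ_succ, Matrix.det_fin_three,
    Matrix.submatrix_apply, Fin.succAbove]
  ring

set_option maxHeartbeats 2000000 in
lemma det6_2 (a b : ℝ) :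
    Matrix.det !![1,0,0,0,a,b;1,1,0,0,0,a;1,1,1,1,0,0;0,1,1,1,1,0;0,0,1,1,1,1;(0:ℝ),0,0,1,1,1] = 1 + 2*a - b + a^2 := by
  simp [Matrix.det_succ_row_zero, Fin.sum_univ_succ, Matrix.det_fin_three,
    Matrix.submatrix_apply, Fin.succAbove]
  ring

set_option maxHeartbeats 2000000 in
lemma base7 (a b : ℝ) : (Mmat a b 7).det = a ^ 2 := by
  have h : Mmat a b 7 = !![1,1,0,0,0,a,b;1,1,1,0,0,0,a;1,1,1,1,0,0,0;0,1,1,1,1,0,0;0,0,1,1,1,1,0;0,0,0,1,1,1,1;0,0,0,0,1,1,1] := by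
    ext i j
    fin_cases i <;> fin_cases j <;> norm_num [Mmat, Matrix.vecHead, Matrix.vecTail]
  rw [h, Matrix.det_succ_column_zero]
  have e0 : (!![1,1,0,0,0,a,b;1,1,1,0,0,0,a;1,1,1,1,0,0,0;0,1,1,1,1,0,0;0,0,1,1,1,1,0;0,0,0,1,1,1,1;0,0,0,0,1,1,1] :
      Matrix (Fin 7) (Fin 7) ℝ).submatrix Fin.succ Fin.succ
      = !![1,1,0,0,0,a;1,1,1,0,0,0;1,1,1,1,0,0;0,1,1,1,1,0;0,0,1,1,1,1;(0:ℝ),0,0,1,1,1] := by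
    ext i j; fin_cases i <;> fin_cases j <;> rfl
  have e1 : (!![1,1,0,0,0,a,b;1,1,1,0,0,0,a;1,1,1,1,0,0,0;0,1,1,1,1,0,0;0,0,1,1,1,1,0;0,0,0,1,1,1,1;0,0,0,0,1,1,1] :
      Matrix (Fin 7) (Fin 7) ℝ).submatrix (Fin.succAbove 1) Fin.succ
      = !![1,0,0,0,a,b;1,1,1,0,0,0;1,1,1,1,0,0;0,1,1,1,1,0;0,0,1,1,1,1;(0:ℝ),0,0,1,1,1] := by
    ext i j; fin_cases i <;> fin_cases j <;> rfl
  have e2 : (!![1,1,0,0,0,a,b;1,1,1,0,0,0,a;1,1,1,1,0,0,0;0,1,1,1,1,0,0;0,0,1,1,1,1,0;0,0,0,1,1,1,1;0,0,0,0,1,1,1] :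
      Matrix (Fin 7) (Fin 7) ℝ).submatrix (Fin.succAbove 2) Fin.succ
      = !![1,0,0,0,a,b;1,1,0,0,0,a;1,1,1,1,0,0;0,1,1,1,1,0;0,0,1,1,1,1;(0:ℝ),0,0,1,1,1] := by
    ext i j; fin_cases i <;> fin_cases j <;> rfl
  rw [Fin.sum_univ_succ, Fin.sum_univ_succ, Fin.sum_univ_succ, Fin.sum_univ_succ,
    Fin.sum_univ_succ, Fin.sum_univ_succ, Fin.sum_univ_one]
  simp [e0, e1, e2, det6_0, det6_1, det6_2]
  ring

lemma Mmat_det (a b : ℝ) : ∀ n, 4 ≤ n → (Mmat a b n).det =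
    (if n % 4 = 0 then (a - 1)^2 else if n % 4 = 1 then a^2 + b + 1
     else if n % 4 = 2 then a^2 + 2*a - b else a^2) := by
  intro n
  induction n using Nat.strong_induction_on with
  | _ n ih =>
    intro hn
    rcases lt_or_ge n 8 with h8 | h8
    · interval_cases n
      · simpa using base4 a b
      · simpa using base5 a b
      · simpa using base6 a b
      · simpa using base7 a b
    · obtain ⟨m, rfl⟩ : ∃ m, n = 4 + m := ⟨n - 4, by omega⟩
      rw [peel a b m (by omega), ih m (by omega) (by omega)]
      have h4 : (4 + m) % 4 = m % 4 := by omega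
      rw [h4]

/-- Generalization: the determinant `B n` of the `n × n` Toeplitz band matrix
with ones for `-1 ≤ i - j ≤ 2`, entries `a` at positions `(1, n-1)` and
`(2, n)`, and entry `b` at position `(1, n)` (all `1`-indexed). -/
theorem stmt_2 (a b : ℝ) (n : ℕ) (hn : 5 ≤ n)
    (B : ℝ)
    (hB : B = Matrix.det (Matrix.of fun i j : Fin n =>
      if ((i : ℕ) = 0 ∧ (j : ℕ) = n - 2) ∨ ((i : ℕ) = 1 ∧ (j : ℕ) = n - 1) then a
      else if (i : ℕ) = 0 ∧ (j : ℕ) = n - 1 then b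
      else if (-1 : ℤ) ≤ ((i : ℕ) : ℤ) - ((j : ℕ) : ℤ) ∧ ((i : ℕ) : ℤ) - ((j : ℕ) : ℤ) ≤ 2 then (1 : ℝ) else 0)) :
    (n % 4 = 0 → B = (a - 1) ^ 2) ∧ (n % 4 = 1 → B = a ^ 2 + b + 1) ∧
    (n % 4 = 2 → B = a ^ 2 + 2 * a - b) ∧ (n % 4 = 3 → B = a ^ 2) := by
  have hM : B = (Mmat a b n).det := hB
  rw [Mmat_det a b n (by omega)] at hM
  refine ⟨fun h => ?_, fun h => ?_, fun h => ?_, fun h => ?_⟩ <;>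
    (rw [hM]; simp [h])
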